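/- arXiv:2406.08512 — 4 statements merged into one kernel-verified Lean document; each statement's English description precedes it below -/
import Mathlib

section
/- Let k ≥ 1 and let α₁, …, α_k : ℝ → ℝ be differentiable functions. Suppose f : ℕ → ℝ → ℝ is a sequence of functions such that f₀, …, f_{k-1} are differentiable and f_n(x) = Σ_{ℓ=1}^{k} α_ℓ(x) · f_{n-ℓ}(x) for all n ≥ k and all x ∈ ℝ. For each x let p_x(t) = t^k − Σ_{ℓ=1}^{k} α_ℓ(x) t^{k-ℓ} be the characteristic polynomial, and let c₀(x), c₁(x), …, c_{2k}(x) be the coefficients of its square, i.e. p_x(t)² = Σ_{i=0}^{2k} c_i(x) t^{2k−i} (so c₀ = 1). Then the sequence of derivatives satisfies, for every n ≥ 2k and every x ∈ ℝ, the relation Σ_{i=0}^{2k} c_i(x) · f′_{n−i}(x) = 0; that is, the derivatives f′₀, f′₁, … satisfy the homogeneous linear recurrence of order 2k whose characteristic polynomial is p². -/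
open Polynomial

noncomputable def ShiftEnd : Module.End ℝ (ℕ → ℝ) where
  toFun h := fun n => h (n + 1)
  map_add' _ _ := rfl
  map_smul' _ _ := rfl

lemma shiftEnd_pow (j : ℕ) (h : ℕ → ℝ) (N : ℕ) : (ShiftEnd ^ j) h N = h (N + j) := by
  induction j generalizing h N with
  | zero => rfl
  | succ j ih =>
    rw [pow_succ, Module.End.mul_apply, ih]
    rfl

lemma aeval_shift_apply (q : Polynomial ℝ) (m : ℕ) (hq : q.natDegree ≤ m)
    (h : ℕ → ℝ) (N : ℕ) :
    (aeval ShiftEnd q) h N = ∑ j ∈ Finset.range (m + 1), q.coeff j * h (N + j) := by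
  conv_lhs => rw [q.as_sum_range' (m + 1) (Nat.lt_succ_of_le hq)]
  rw [map_sum]
  simp only [LinearMap.coe_sum, Finset.sum_apply, aeval_monomial,
    Module.End.mul_apply, Module.algebraMap_end_apply, Pi.smul_apply, smul_eq_mul]
  refine Finset.sum_congr rfl fun j _ => ?_
  rw [shiftEnd_pow]

lemma aeval_char (k : ℕ) (a : ℕ → ℝ) (h : ℕ → ℝ) (N : ℕ) :
    (aeval ShiftEnd (X ^ k - ∑ ℓ ∈ Finset.Icc 1 k, C (a ℓ) * X ^ (k - ℓ))) h N
      = h (N + k) - ∑ ℓ ∈ Finset.Icc 1 k, a ℓ * h (N + (k - ℓ)) := by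
  rw [map_sub, map_sum]
  simp only [map_mul, aeval_C, aeval_X_pow, LinearMap.sub_apply, Pi.sub_apply,
    LinearMap.coe_sum, Finset.sum_apply, Module.End.mul_apply,
    Module.algebraMap_end_apply, Pi.smul_apply, smul_eq_mul, shiftEnd_pow]

open Polynomial in
/-- If `f` satisfies a homogeneous linear recurrence of order `k` with differentiable
coefficients and differentiable initial values, then the sequence of derivatives
satisfies the homogeneous linear recurrence of order `2k` whose characteristic
polynomial is `p²`, where `p x = X^k - ∑_{ℓ=1}^k α ℓ x • X^(k-ℓ)` is the
characteristic polynomial of the original recurrence.  The coefficient `c i x`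
of the new recurrence is the coefficient of `t^(2k-i)` in `(p x)^2`. -/
theorem deriv_seq_satisfies_recurrence_char_poly_sq
    (k : ℕ) (hk : 1 ≤ k) (α : ℕ → ℝ → ℝ)
    (hα : ∀ ℓ ∈ Finset.Icc 1 k, Differentiable ℝ (α ℓ))
    (f : ℕ → ℝ → ℝ)
    (hinit : ∀ i < k, Differentiable ℝ (f i))
    (hrec : ∀ n, k ≤ n → ∀ x : ℝ, f n x = ∑ ℓ ∈ Finset.Icc 1 k, α ℓ x * f (n - ℓ) x)
    (p : ℝ → Polynomial ℝ)
    (hp : ∀ x : ℝ, p x = X ^ k - ∑ ℓ ∈ Finset.Icc 1 k, C (α ℓ x) * X ^ (k - ℓ)) :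
    ∀ n, 2 * k ≤ n → ∀ x : ℝ,
      ∑ i ∈ Finset.range (2 * k + 1),
        ((p x) ^ 2).coeff (2 * k - i) * deriv (f (n - i)) x = 0 := by
  -- every f n is differentiable
  have hdiff : ∀ n, Differentiable ℝ (f n) := by
    intro n
    induction n using Nat.strong_induction_on with
    | _ n ih =>
      by_cases h : n < k
      · exact hinit n h
      · push_neg at h
        have hfn : f n = fun x => ∑ ℓ ∈ Finset.Icc 1 k, α ℓ x * f (n - ℓ) x :=
          funext (hrec n h)
        rw [hfn]
        apply Differentiable.fun_sum
        intro ℓ hℓ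
        have h1 := (Finset.mem_Icc.1 hℓ).1
        exact (hα ℓ hℓ).mul (ih (n - ℓ) (by omega))
  -- derivative recurrence
  have hderiv : ∀ n, k ≤ n → ∀ x : ℝ, deriv (f n) x =
      ∑ ℓ ∈ Finset.Icc 1 k,
        (deriv (α ℓ) x * f (n - ℓ) x + α ℓ x * deriv (f (n - ℓ)) x) := by
    intro n hn x
    have hfn : f n = fun x => ∑ ℓ ∈ Finset.Icc 1 k, α ℓ x * f (n - ℓ) x :=
      funext (hrec n hn)
    rw [hfn]
    have hd : HasDerivAt (fun x => ∑ ℓ ∈ Finset.Icc 1 k, α ℓ x * f (n - ℓ) x)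
        (∑ ℓ ∈ Finset.Icc 1 k,
          (deriv (α ℓ) x * f (n - ℓ) x + α ℓ x * deriv (f (n - ℓ)) x)) x := by
      apply HasDerivAt.fun_sum
      intro ℓ hℓ
      exact ((hα ℓ hℓ x).hasDerivAt).mul ((hdiff (n - ℓ) x).hasDerivAt)
    exact hd.deriv
  intro n hn x
  set g : ℕ → ℝ := fun m => f m x with hg
  set g' : ℕ → ℝ := fun m => deriv (f m) x with hg'
  -- the characteristic operator kills g
  have h1 : ∀ N, (aeval ShiftEnd (p x)) g N = 0 := by
    intro N
    rw [hp x, aeval_char]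
    have := hrec (N + k) (by omega) x
    rw [show f (N + k) x = g (N + k) from rfl] at this
    rw [this]
    rw [sub_eq_zero]
    refine Finset.sum_congr rfl fun ℓ hℓ => ?_
    have h1 := (Finset.mem_Icc.1 hℓ)
    congr 2
    omega
  -- applied to g', gives the extra term
  have h2 : ∀ N, (aeval ShiftEnd (p x)) g' N
      = ∑ ℓ ∈ Finset.Icc 1 k, deriv (α ℓ) x * g (N + (k - ℓ)) := by
    intro N
    rw [hp x, aeval_char]
    have hD := hderiv (N + k) (by omega) x
    have hre : ∀ ℓ ∈ Finset.Icc 1 k, N + k - ℓ = N + (k - ℓ) := by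
      intro ℓ hℓ
      have := Finset.mem_Icc.1 hℓ
      omega
    rw [show g' (N + k) = deriv (f (N + k)) x from rfl, hD]
    rw [Finset.sum_add_distrib]
    have e1 : ∑ ℓ ∈ Finset.Icc 1 k, α ℓ x * deriv (f (N + k - ℓ)) x
        = ∑ ℓ ∈ Finset.Icc 1 k, α ℓ x * g' (N + (k - ℓ)) := by
      refine Finset.sum_congr rfl fun ℓ hℓ => ?_
      rw [hre ℓ hℓ]
    have e2 : ∑ ℓ ∈ Finset.Icc 1 k, deriv (α ℓ) x * f (N + k - ℓ) x
        = ∑ ℓ ∈ Finset.Icc 1 k, deriv (α ℓ) x * g (N + (k - ℓ)) := by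
      refine Finset.sum_congr rfl fun ℓ hℓ => ?_
      rw [hre ℓ hℓ]
    rw [e1, e2]
    ring
  -- the squared operator kills g'
  have h3 : ∀ M, (aeval ShiftEnd ((p x) ^ 2)) g' M = 0 := by
    intro M
    rw [sq, map_mul, Module.End.mul_apply]
    have hfun : (aeval ShiftEnd (p x)) g'
        = fun N => ∑ ℓ ∈ Finset.Icc 1 k, deriv (α ℓ) x * g (N + (k - ℓ)) :=
      funext h2
    rw [hfun, hp x, aeval_char]
    have key : (∑ ℓ ∈ Finset.Icc 1 k, deriv (α ℓ) x * g (M + k + (k - ℓ)))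
        - ∑ j ∈ Finset.Icc 1 k, α j x *
            ∑ ℓ ∈ Finset.Icc 1 k, deriv (α ℓ) x * g (M + (k - j) + (k - ℓ))
        = ∑ ℓ ∈ Finset.Icc 1 k, deriv (α ℓ) x *
            ((aeval ShiftEnd (p x)) g (M + (k - ℓ))) := by
      have hc : ∀ ℓ, (aeval ShiftEnd (p x)) g (M + (k - ℓ))
          = g (M + (k - ℓ) + k)
            - ∑ j ∈ Finset.Icc 1 k, α j x * g (M + (k - ℓ) + (k - j)) := by
        intro ℓ; rw [hp x, aeval_char]
      simp only [hc, mul_sub, Finset.sum_sub_distrib, Finset.mul_sum]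
      congr 1
      · refine Finset.sum_congr rfl fun ℓ _ => ?_
        congr 2
        omega
      · rw [Finset.sum_comm]
        refine Finset.sum_congr rfl fun ℓ _ => ?_
        refine Finset.sum_congr rfl fun j _ => ?_
        rw [show M + (k - j) + (k - ℓ) = M + (k - ℓ) + (k - j) by omega]
        ring
    rw [key]
    simp only [h1, mul_zero, Finset.sum_const_zero]
  -- degree bound
  have hdeg : ((p x) ^ 2).natDegree ≤ 2 * k := by
    have hdp : (p x).natDegree ≤ k := by
      rw [hp x]
      refine le_trans (natDegree_sub_le _ _) ?_
      rw [natDegree_X_pow]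
      refine max_le le_rfl ?_
      refine Polynomial.natDegree_sum_le_of_forall_le _ _ fun ℓ hℓ => ?_
      refine le_trans (natDegree_C_mul_le _ _) ?_
      rw [natDegree_X_pow]
      omega
    calc ((p x) ^ 2).natDegree ≤ 2 * (p x).natDegree := natDegree_pow_le
      _ ≤ 2 * k := by omega
  -- conclude
  calc ∑ i ∈ Finset.range (2 * k + 1),
        ((p x) ^ 2).coeff (2 * k - i) * deriv (f (n - i)) x
      = ∑ i ∈ Finset.range (2 * k + 1),
        ((p x) ^ 2).coeff (2 * k - i) * g' (n - 2 * k + (2 * k - i)) := by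
        refine Finset.sum_congr rfl fun i hi => ?_
        have hi' := Finset.mem_range.1 hi
        have he : n - 2 * k + (2 * k - i) = n - i := by omega
        rw [he]
    _ = ∑ j ∈ Finset.range (2 * k + 1),
        ((p x) ^ 2).coeff j * g' (n - 2 * k + j) :=
        Finset.sum_range_reflect (fun j => ((p x) ^ 2).coeff j * g' (n - 2 * k + j)) (2 * k + 1)
    _ = (aeval ShiftEnd ((p x) ^ 2)) g' (n - 2 * k) :=
        (aeval_shift_apply _ _ hdeg _ _).symm
    _ = 0 := h3 _
end

section
/- Let k ≥ 1 and let α₁, …, α_k : ℝ → ℝ be differentiable functions. Suppose f : ℕ → ℝ → ℝ has differentiable initial values f₀, …, f_{k-1} and satisfies f_n(x) = Σ_{ℓ=1}^{k} α_ℓ(x) f_{n-ℓ}(x) for all n ≥ k and x ∈ ℝ. Write p_x(t) = t^k − Σ_{ℓ=1}^{k} α_ℓ(x) t^{k−ℓ}, and let p′_x(t) = −Σ_{ℓ=1}^{k} α′_ℓ(x) t^{k−ℓ} denote the polynomial obtained by differentiating each coefficient of p with respect to x. Suppose β₀, …, β_k and γ₀, …, γ_k are real-valued functions on ℝ such that the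 polynomials β_x(t) = Σ_{i=0}^{k} β_i(x) t^{k−i} and γ_x(t) = Σ_{i=0}^{k} γ_i(x) t^{k−i} satisfy the polynomial identity β_x(t) · p_x(t) = −γ_x(t) · p′_x(t) for every x ∈ ℝ. Then, writing γ_x(t) · p_x(t) = Σ_{i=0}^{2k} d_i(x) t^{2k−i}, the derivatives satisfy Σ_{i=0}^{2k} d_i(x) · f′_{n−i}(x) = 0 for every n ≥ 2k and every x ∈ ℝ. -/
open Polynomial Finset


private lemma aux_delta (K m : ℕ) (hm : m ≤ K) (g : ℕ → ℝ) :
    ∑ j ∈ range (K + 1), (X ^ m : ℝ[X]).coeff j * g j = g m := by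
  rw [Finset.sum_eq_single m]
  · simp [coeff_X_pow]
  · intro j _ hj; simp [coeff_X_pow, hj]
  · intro h; exact absurd (Finset.mem_range.2 (by omega)) h

private lemma aux_monomial (r : ℝ[X]) (K i : ℕ) (hi : i ≤ K) (hr : r.natDegree ≤ K)
    (v : ℕ → ℝ) :
    ∑ m ∈ range (2 * K + 1), (r * X ^ i).coeff m * v m
      = ∑ j ∈ range (K + 1), r.coeff j * v (i + j) := by
  have h1 : ∑ m ∈ range (2 * K + 1), (r * X ^ i).coeff m * v m
      = ∑ m ∈ Finset.Ico i (2 * K + 1), r.coeff (m - i) * v m := by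
    rw [Finset.range_eq_Ico]
    rw [← Finset.sum_subset (Finset.Ico_subset_Ico (Nat.zero_le i) le_rfl)]
    · exact Finset.sum_congr rfl fun m hm => by
        rw [coeff_mul_X_pow', if_pos (Finset.mem_Ico.1 hm).1]
    · intro m hm hm'
      have hmi : m < i := by
        simp only [Finset.mem_Ico] at hm hm'; omega
      rw [coeff_mul_X_pow', if_neg (by omega)]; ring
  rw [h1, Finset.sum_Ico_eq_sum_range]
  have h2 : ∀ j ∈ range (2 * K + 1 - i), r.coeff (i + j - i) * v (i + j)
      = r.coeff j * v (i + j) := fun j _ => by simp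
  rw [Finset.sum_congr rfl h2]
  symm
  apply Finset.sum_subset
  · apply Finset.range_subset_range.2; omega
  · intro j hj hj'
    have : K < j := by simp only [Finset.mem_range] at hj hj'; omega
    rw [Polynomial.coeff_eq_zero_of_natDegree_lt (by omega)]; ring

private lemma aux_prod (q r : ℝ[X]) (K : ℕ) (hq : q.natDegree ≤ K) (hr : r.natDegree ≤ K)
    (v : ℕ → ℝ) :
    ∑ m ∈ range (2 * K + 1), (q * r).coeff m * v m
      = ∑ i ∈ range (K + 1), q.coeff i *
          ∑ j ∈ range (K + 1), r.coeff j * v (i + j) := by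
  conv_lhs => rw [q.as_sum_range' (K + 1) (by omega), Finset.sum_mul]
  have hc : ∀ m, (∑ i ∈ range (K + 1), monomial i (q.coeff i) * r).coeff m
      = ∑ i ∈ range (K + 1), q.coeff i * (r * X ^ i).coeff m := by
    intro m
    rw [Polynomial.finset_sum_coeff]
    refine Finset.sum_congr rfl fun i _ => ?_
    rw [← C_mul_X_pow_eq_monomial, mul_assoc, mul_comm (X ^ i) r, Polynomial.coeff_C_mul]
  simp_rw [hc, Finset.sum_mul]
  rw [Finset.sum_comm]
  refine Finset.sum_congr rfl fun i hi => ?_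
  rw [Finset.mul_sum]
  simp_rw [mul_assoc, ← Finset.mul_sum]
  congr 1
  exact aux_monomial r K i (Nat.lt_succ_iff.1 (Finset.mem_range.1 hi)) hr v


open Polynomial in
/-- Suppose `f` satisfies a homogeneous linear recurrence of order `k` with
differentiable coefficients `α 1, …, α k` and differentiable initial values.
Let `p x` be the characteristic polynomial and `p' x` its coefficientwise
derivative with respect to `x`.  If function-coefficient polynomials
`B x = ∑ β i x • t^(k-i)` and `G x = ∑ γ i x • t^(k-i)` satisfy the polynomial
identity `B x * p x = -(G x * p' x)` for all `x`, then the derivatives satisfy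
the linear relation whose coefficients are those of `G x * p x`. -/
theorem deriv_seq_recurrence_of_poly_identity
    (k : ℕ) (hk : 1 ≤ k) (α : ℕ → ℝ → ℝ)
    (hα : ∀ ℓ ∈ Finset.Icc 1 k, Differentiable ℝ (α ℓ))
    (f : ℕ → ℝ → ℝ)
    (hinit : ∀ i < k, Differentiable ℝ (f i))
    (hrec : ∀ n, k ≤ n → ∀ x : ℝ, f n x = ∑ ℓ ∈ Finset.Icc 1 k, α ℓ x * f (n - ℓ) x)
    (p p' : ℝ → Polynomial ℝ)
    (hp : ∀ x : ℝ, p x = X ^ k - ∑ ℓ ∈ Finset.Icc 1 k, C (α ℓ x) * X ^ (k - ℓ))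
    (hp' : ∀ x : ℝ, p' x = -∑ ℓ ∈ Finset.Icc 1 k, C (deriv (α ℓ) x) * X ^ (k - ℓ))
    (β γ : ℕ → ℝ → ℝ) (B G : ℝ → Polynomial ℝ)
    (hB : ∀ x : ℝ, B x = ∑ i ∈ Finset.range (k + 1), C (β i x) * X ^ (k - i))
    (hG : ∀ x : ℝ, G x = ∑ i ∈ Finset.range (k + 1), C (γ i x) * X ^ (k - i))
    (hident : ∀ x : ℝ, B x * p x = -(G x * p' x)) :
    ∀ n, 2 * k ≤ n → ∀ x : ℝ,
      ∑ i ∈ Finset.range (2 * k + 1),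
        (G x * p x).coeff (2 * k - i) * deriv (f (n - i)) x = 0 := by
  -- all f n are differentiable
  have hdiff : ∀ n, Differentiable ℝ (f n) := by
    intro n
    induction n using Nat.strong_induction_on with
    | _ n ih =>
      by_cases hn : n < k
      · exact hinit n hn
      · push_neg at hn
        have hfe : f n = fun x => ∑ ℓ ∈ Finset.Icc 1 k, α ℓ x * f (n - ℓ) x :=
          funext (hrec n hn)
        rw [hfe]
        exact Differentiable.fun_sum fun ℓ hℓ => (hα ℓ hℓ).mul
          (ih (n - ℓ) (by have := Finset.mem_Icc.1 hℓ; omega))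
  -- coefficient formulas
  have hcoeffp : ∀ (x : ℝ) (j : ℕ), (p x).coeff j
      = (X ^ k : ℝ[X]).coeff j
        - ∑ ℓ ∈ Finset.Icc 1 k, α ℓ x * (X ^ (k - ℓ) : ℝ[X]).coeff j := by
    intro x j
    rw [hp x, Polynomial.coeff_sub, Polynomial.finset_sum_coeff]
    simp [Polynomial.coeff_C_mul]
  have hcoeffp' : ∀ (x : ℝ) (j : ℕ), (p' x).coeff j
      = -∑ ℓ ∈ Finset.Icc 1 k, deriv (α ℓ) x * (X ^ (k - ℓ) : ℝ[X]).coeff j := by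
    intro x j
    rw [hp' x, Polynomial.coeff_neg, Polynomial.finset_sum_coeff]
    simp [Polynomial.coeff_C_mul]
  -- the recurrence in coefficient form
  have lemA : ∀ (c : ℕ) (x : ℝ),
      ∑ j ∈ Finset.range (k + 1), (p x).coeff j * f (c + j) x = 0 := by
    intro c x
    simp_rw [hcoeffp x, sub_mul, Finset.sum_sub_distrib, Finset.sum_mul]
    rw [aux_delta k k le_rfl (fun j => f (c + j) x)]
    rw [Finset.sum_comm]
    have h2 : ∀ ℓ ∈ Finset.Icc 1 k,
        ∑ j ∈ Finset.range (k + 1), α ℓ x * (X ^ (k - ℓ) : ℝ[X]).coeff j * f (c + j) x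
          = α ℓ x * f (c + k - ℓ) x := by
      intro ℓ hℓ
      obtain ⟨h1ℓ, hℓk⟩ := Finset.mem_Icc.1 hℓ
      have : c + k - ℓ = c + (k - ℓ) := by omega
      rw [this]
      rw [← aux_delta k (k - ℓ) (by omega) (fun j => f (c + j) x), Finset.mul_sum]
      exact Finset.sum_congr rfl fun j _ => by ring
    rw [Finset.sum_congr rfl h2, ← hrec (c + k) (by omega) x]
    exact sub_self _
  -- differentiated recurrence
  have lemA' : ∀ (c : ℕ) (x : ℝ),
      ∑ j ∈ Finset.range (k + 1),
        ((p' x).coeff j * f (c + j) x + (p x).coeff j * deriv (f (c + j)) x) = 0 := by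
    intro c x
    have hF : (fun y => ∑ j ∈ Finset.range (k + 1), (p y).coeff j * f (c + j) y)
        = fun _ : ℝ => (0 : ℝ) := funext fun y => lemA c y
    have hD : HasDerivAt (fun y => ∑ j ∈ Finset.range (k + 1), (p y).coeff j * f (c + j) y)
        (∑ j ∈ Finset.range (k + 1),
          ((p' x).coeff j * f (c + j) x + (p x).coeff j * deriv (f (c + j)) x)) x := by
      apply HasDerivAt.fun_sum
      intro j hj
      have hc : HasDerivAt (fun y => (p y).coeff j) ((p' x).coeff j) x := by
        have he : (fun y => (p y).coeff j) = fun y =>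
            (X ^ k : ℝ[X]).coeff j
              - ∑ ℓ ∈ Finset.Icc 1 k, α ℓ y * (X ^ (k - ℓ) : ℝ[X]).coeff j :=
          funext fun y => hcoeffp y j
        rw [he, hcoeffp' x j]
        exact HasDerivAt.const_sub _ (HasDerivAt.fun_sum fun ℓ hℓ =>
          ((hα ℓ hℓ x).hasDerivAt).mul_const _)
      exact hc.mul ((hdiff (c + j) x).hasDerivAt)
    rw [hF] at hD
    exact (hD.unique (hasDerivAt_const x 0)).symm ▸ rfl
  -- degree bounds
  have hdegP : ∀ x : ℝ, (p x).natDegree ≤ k := by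
    intro x
    rw [hp x]
    refine le_trans (Polynomial.natDegree_sub_le _ _) (max_le ?_ ?_)
    · simp [Polynomial.natDegree_X_pow]
    · exact Polynomial.natDegree_sum_le_of_forall_le _ _ fun ℓ hℓ =>
        le_trans (Polynomial.natDegree_C_mul_le _ _) ((Polynomial.natDegree_X_pow _).le.trans (Nat.sub_le k _))
  have hdegP' : ∀ x : ℝ, (p' x).natDegree ≤ k := by
    intro x
    rw [hp' x, Polynomial.natDegree_neg]
    exact Polynomial.natDegree_sum_le_of_forall_le _ _ fun ℓ hℓ =>
      le_trans (Polynomial.natDegree_C_mul_le _ _) ((Polynomial.natDegree_X_pow _).le.trans (Nat.sub_le k _))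
  have hdegB : ∀ x : ℝ, (B x).natDegree ≤ k := by
    intro x
    rw [hB x]
    exact Polynomial.natDegree_sum_le_of_forall_le _ _ fun i hi =>
      le_trans (Polynomial.natDegree_C_mul_le _ _) ((Polynomial.natDegree_X_pow _).le.trans (Nat.sub_le k _))
  have hdegG : ∀ x : ℝ, (G x).natDegree ≤ k := by
    intro x
    rw [hG x]
    exact Polynomial.natDegree_sum_le_of_forall_le _ _ fun i hi =>
      le_trans (Polynomial.natDegree_C_mul_le _ _) ((Polynomial.natDegree_X_pow _).le.trans (Nat.sub_le k _))
  -- final assembly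
  intro n hn x
  set b := n - 2 * k with hb
  have key : ∑ m ∈ Finset.range (2 * k + 1), (G x * p x).coeff m * deriv (f (b + m)) x = 0 := by
    rw [aux_prod (G x) (p x) k (hdegG x) (hdegP x) (fun m => deriv (f (b + m)) x)]
    have step1 : ∀ i ∈ Finset.range (k + 1),
        (G x).coeff i * ∑ j ∈ Finset.range (k + 1), (p x).coeff j * deriv (f (b + (i + j))) x
          = (G x).coeff i * -(∑ j ∈ Finset.range (k + 1), (p' x).coeff j * f (b + (i + j)) x) := by
      intro i _
      congr 1
      have h0 := lemA' (b + i) x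
      rw [Finset.sum_add_distrib] at h0
      have hre : ∀ j : ℕ, b + i + j = b + (i + j) := fun j => by omega
      simp_rw [hre] at h0
      linarith
    rw [Finset.sum_congr rfl step1]
    have step2 : ∑ i ∈ Finset.range (k + 1),
        (G x).coeff i * -(∑ j ∈ Finset.range (k + 1), (p' x).coeff j * f (b + (i + j)) x)
        = -∑ m ∈ Finset.range (2 * k + 1), (G x * p' x).coeff m * f (b + m) x := by
      rw [aux_prod (G x) (p' x) k (hdegG x) (hdegP' x) (fun m => f (b + m) x)]
      rw [← Finset.sum_neg_distrib]
      exact Finset.sum_congr rfl fun i _ => by ring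
    rw [step2]
    have step3 : -∑ m ∈ Finset.range (2 * k + 1), (G x * p' x).coeff m * f (b + m) x
        = ∑ m ∈ Finset.range (2 * k + 1), (B x * p x).coeff m * f (b + m) x := by
      rw [← Finset.sum_neg_distrib]
      refine Finset.sum_congr rfl fun m _ => ?_
      rw [hident x, Polynomial.coeff_neg]
      ring
    rw [step3, aux_prod (B x) (p x) k (hdegB x) (hdegP x) (fun m => f (b + m) x)]
    refine Finset.sum_eq_zero fun i _ => ?_
    have h0 := lemA (b + i) x
    have hre : ∀ j : ℕ, b + i + j = b + (i + j) := fun j => by omega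
    simp_rw [hre] at h0
    rw [h0, mul_zero]
  have hrw : ∀ i ∈ Finset.range (2 * k + 1),
      (G x * p x).coeff (2 * k - i) * deriv (f (n - i)) x
        = (G x * p x).coeff (2 * k - i) * deriv (f (b + (2 * k - i))) x := by
    intro i hi
    have hi' := Finset.mem_range.1 hi
    have : n - i = b + (2 * k - i) := by omega
    rw [this]
  rw [Finset.sum_congr rfl hrw]
  have := Finset.sum_range_reflect
    (fun m => (G x * p x).coeff m * deriv (f (b + m)) x) (2 * k + 1)
  simp only [Nat.add_sub_cancel] at this
  exact this.trans key
end

section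
/- Let k ≥ 1 and let α₁, …, α_k : ℝ → ℝ be differentiable functions. Suppose f : ℕ → ℝ → ℝ has differentiable initial values f₀, …, f_{k-1} and satisfies f_n(x) = Σ_{ℓ=1}^{k} α_ℓ(x) f_{n-ℓ}(x) for all n ≥ k and x ∈ ℝ. Write p_x(t) = t^k − Σ_{ℓ=1}^{k} α_ℓ(x) t^{k−ℓ} and let p′_x(t) = −Σ_{ℓ=1}^{k} α′_ℓ(x) t^{k−ℓ} be its coefficientwise derivative with respect to x. Suppose 0 ≤ d ≤ k and q_x(t), r_x(t), s_x(t) are polynomials in t with real-valued function coefficients such that q is a common divisor of p and p′ with cofactor r: namely p_x(t) = q_x(t) · r_x(t) and p′_x(t) = q_x(t) · s_x(t) for all x, where q has degree d and r is monic of degree k − d. Then, writing r_x(t) · p_x(t) = Σ_{i=0}^{2k−d} e_i(x) t^{2k−d−i} (so e₀ = 1), the derivatives satisfy Σ_{i=0}^{2k−d} e_i(x) · f′_{n−i}(x) = 0 for every n ≥ 2k − d and every x ∈ ℝ; that is, the sequence f′₀, f′₁, … satisfies the homogeneous linear recurrence of order 2k − d whose characteristic polynomial is p²/q. -/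
section ShiftAux
open Polynomial

noncomputable def shiftE : Module.End ℝ (ℕ → ℝ) where
  toFun g := fun m => g (m + 1)
  map_add' _ _ := rfl
  map_smul' _ _ := rfl

lemma shiftE_pow (j : ℕ) (g : ℕ → ℝ) (m : ℕ) : ((shiftE ^ j) g) m = g (m + j) := by
  induction j generalizing g m with
  | zero => rfl
  | succ n ih =>
    rw [pow_succ]
    show ((shiftE ^ n) (shiftE g)) m = _
    rw [ih]
    show g (m + n + 1) = g (m + (n + 1))
    ring_nf

lemma aeval_shift (a : Polynomial ℝ) (N : ℕ) (hN : a.natDegree < N) (g : ℕ → ℝ) (m : ℕ) :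
    ((aeval shiftE a) g) m = ∑ j ∈ Finset.range N, a.coeff j * g (m + j) := by
  rw [aeval_eq_sum_range' hN]
  simp [LinearMap.sum_apply, shiftE_pow]

lemma aeval_shift_charpoly (k : ℕ) (a : ℕ → ℝ) (g : ℕ → ℝ) (m : ℕ) :
    ((aeval shiftE (X ^ k - ∑ ℓ ∈ Finset.Icc 1 k, C (a ℓ) * X ^ (k - ℓ))) g) m
      = g (m + k) - ∑ ℓ ∈ Finset.Icc 1 k, a ℓ * g (m + (k - ℓ)) := by
  simp [map_sub, map_sum, LinearMap.sub_apply, LinearMap.sum_apply, shiftE_pow,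
    Algebra.smul_def, Module.End.mul_apply]

lemma aeval_shift_neg_sum (k : ℕ) (a : ℕ → ℝ) (g : ℕ → ℝ) (m : ℕ) :
    ((aeval shiftE (-∑ ℓ ∈ Finset.Icc 1 k, C (a ℓ) * X ^ (k - ℓ))) g) m
      = -∑ ℓ ∈ Finset.Icc 1 k, a ℓ * g (m + (k - ℓ)) := by
  simp [map_neg, map_sum, LinearMap.neg_apply, LinearMap.sum_apply, shiftE_pow,
    Algebra.smul_def, Module.End.mul_apply]

end ShiftAux


open Polynomial in
/-- Suppose `f` satisfies a homogeneous linear recurrence of order `k` with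
differentiable coefficients and differentiable initial values, with
characteristic polynomial `p x` and coefficientwise `x`-derivative `p' x`.
If `q` is a common divisor of `p` and `p'` of degree `d ≤ k`, with monic
cofactor `r = p/q` of degree `k - d`, then the sequence of derivatives
satisfies the homogeneous linear recurrence of order `2k - d` whose
characteristic polynomial is `r * p = p²/q`. -/
theorem deriv_seq_recurrence_char_poly_sq_div_common_divisor
    (k : ℕ) (hk : 1 ≤ k) (α : ℕ → ℝ → ℝ)
    (hα : ∀ ℓ ∈ Finset.Icc 1 k, Differentiable ℝ (α ℓ))
    (f : ℕ → ℝ → ℝ)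
    (hinit : ∀ i < k, Differentiable ℝ (f i))
    (hrec : ∀ n, k ≤ n → ∀ x : ℝ, f n x = ∑ ℓ ∈ Finset.Icc 1 k, α ℓ x * f (n - ℓ) x)
    (p p' : ℝ → Polynomial ℝ)
    (hp : ∀ x : ℝ, p x = X ^ k - ∑ ℓ ∈ Finset.Icc 1 k, C (α ℓ x) * X ^ (k - ℓ))
    (hp' : ∀ x : ℝ, p' x = -∑ ℓ ∈ Finset.Icc 1 k, C (deriv (α ℓ) x) * X ^ (k - ℓ))
    (d : ℕ) (hd : d ≤ k)
    (q r s : ℝ → Polynomial ℝ)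
    (hq : ∀ x : ℝ, p x = q x * r x)
    (hs : ∀ x : ℝ, p' x = q x * s x)
    (hqdeg : ∀ x : ℝ, (q x).degree = (d : ℕ))
    (hrmonic : ∀ x : ℝ, (r x).Monic)
    (hrdeg : ∀ x : ℝ, (r x).natDegree = k - d) :
    ∀ n, 2 * k - d ≤ n → ∀ x : ℝ,
      ∑ i ∈ Finset.range (2 * k - d + 1),
        (r x * p x).coeff (2 * k - d - i) * deriv (f (n - i)) x = 0 := by
  -- all f n are differentiable
  have hdiff : ∀ n, Differentiable ℝ (f n) := by
    intro n
    induction n using Nat.strong_induction_on with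
    | _ n ih =>
      by_cases h : n < k
      · exact hinit n h
      · push_neg at h
        have : f n = fun x => ∑ ℓ ∈ Finset.Icc 1 k, α ℓ x * f (n - ℓ) x :=
          funext (hrec n h)
        rw [this]
        apply Differentiable.fun_sum
        intro ℓ hℓ
        have hℓ1 := (Finset.mem_Icc.mp hℓ).1
        have hℓ2 := (Finset.mem_Icc.mp hℓ).2
        exact (hα ℓ hℓ).mul (ih (n - ℓ) (by omega))
  intro n hn x
  set g : ℕ → ℝ := fun m => f m x with hg
  set g' : ℕ → ℝ := fun m => deriv (f m) x with hg'
  -- f satisfies: aeval shiftE (p x) g = 0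
  have hPg : (aeval shiftE (p x)) g = 0 := by
    funext m
    rw [hp x, aeval_shift_charpoly]
    have := hrec (m + k) (by omega) x
    simp only [Pi.zero_apply, hg]
    rw [this]
    apply sub_eq_zero_of_eq
    apply Finset.sum_congr rfl
    intro ℓ hℓ
    have hℓ2 := (Finset.mem_Icc.mp hℓ).2
    have hidx : m + k - ℓ = m + (k - ℓ) := by omega
    rw [hidx]
  -- differentiated recurrence: aeval (p x) g' = - aeval (p' x) g
  have hkey : (aeval shiftE (p x)) g' = -((aeval shiftE (p' x)) g) := by
    funext m
    rw [hp x, hp' x, aeval_shift_charpoly, Pi.neg_apply, aeval_shift_neg_sum, neg_neg]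
    have hfn : f (m + k) = fun y => ∑ ℓ ∈ Finset.Icc 1 k, α ℓ y * f (m + k - ℓ) y :=
      funext (hrec (m + k) (by omega))
    have hder : deriv (f (m + k)) x
        = ∑ ℓ ∈ Finset.Icc 1 k, (deriv (α ℓ) x * f (m + k - ℓ) x
            + α ℓ x * deriv (f (m + k - ℓ)) x) := by
      rw [hfn]
      rw [deriv_fun_sum (A := fun ℓ y => α ℓ y * f (m + k - ℓ) y) (fun ℓ hℓ => (((hα ℓ hℓ).mul (hdiff _)).differentiableAt :
        DifferentiableAt ℝ (fun y => α ℓ y * f (m + k - ℓ) y) x))]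
      apply Finset.sum_congr rfl
      intro ℓ hℓ
      rw [deriv_fun_mul ((hα ℓ hℓ) x) ((hdiff _) x)]
    have hidx : ∀ ℓ ∈ Finset.Icc 1 k, m + (k - ℓ) = m + k - ℓ := by
      intro ℓ hℓ
      have := (Finset.mem_Icc.mp hℓ).2
      omega
    simp only [hg, hg']
    rw [hder, Finset.sum_add_distrib]
    rw [Finset.sum_congr rfl (fun ℓ hℓ => by rw [hidx ℓ hℓ] :
      ∀ ℓ ∈ Finset.Icc 1 k, deriv (α ℓ) x * f (m + (k - ℓ)) x
        = deriv (α ℓ) x * f (m + k - ℓ) x)]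
    rw [Finset.sum_congr rfl (fun ℓ hℓ => by rw [hidx ℓ hℓ] :
      ∀ ℓ ∈ Finset.Icc 1 k, α ℓ x * deriv (f (m + (k - ℓ))) x
        = α ℓ x * deriv (f (m + k - ℓ)) x)]
    ring
  -- main operator identity
  have hmain : (aeval shiftE (r x * p x)) g' = 0 := by
    rw [map_mul, Module.End.mul_apply, hkey, map_neg, ← Module.End.mul_apply, ← map_mul]
    have : r x * p' x = s x * (q x * r x) := by rw [hs x]; ring
    rw [this, ← hq x, map_mul, Module.End.mul_apply, hPg, map_zero, neg_zero]
  -- degree bound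
  have hpdeg : (p x).natDegree ≤ k := by
    rw [hp x]
    apply le_trans (natDegree_sub_le _ _)
    simp only [natDegree_X_pow]
    apply max_le le_rfl
    apply natDegree_sum_le_of_forall_le
    intro ℓ hℓ
    apply le_trans (natDegree_C_mul_le _ _)
    simp only [natDegree_X_pow]
    omega
  have hrp : (r x * p x).natDegree < 2 * k - d + 1 := by
    have h1 := natDegree_mul_le (p := r x) (q := p x)
    have h2 := hrdeg x
    omega
  -- final reindexing
  have hfin := aeval_shift (r x * p x) (2 * k - d + 1) hrp g' (n - (2 * k - d))
  rw [hmain] at hfin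
  simp only [Pi.zero_apply] at hfin
  rw [← Finset.sum_range_reflect] at hfin
  rw [hfin]
  apply Finset.sum_congr rfl
  intro i hi
  have hi' := Finset.mem_range.mp hi
  have e1 : 2 * k - d + 1 - 1 - i = 2 * k - d - i := by omega
  rw [e1]
  have e2 : n - (2 * k - d) + (2 * k - d - i) = n - i := by omega
  rw [e2]
end

section
/- Suppose f : ℕ → ℝ → ℝ is a sequence of functions with differentiable initial values f₀ and f₁, satisfying f_n(x) = (x + 1) f_{n−1}(x) − x f_{n−2}(x) for all n ≥ 2 and all x ∈ ℝ. Then every f_n is differentiable, and for every n ≥ 3 and every x ∈ ℝ, the derivatives satisfy f′_n(x) = (2x + 1) f′_{n−1}(x) − x(x + 2) f′_{n−2}(x) + x² f′_{n−3}(x); that is, the derivative sequence satisfies a homogeneous linear recurrence of order 3 rather than 4. -/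
/-- For the recurrence `f n = (x+1) f (n-1) - x f (n-2)`, whose characteristic
polynomial `p(t) = (t - x)(t - 1)` shares the factor `t - 1` with its
coefficientwise `x`-derivative `p'(t) = -(t - 1)`, every `f n` is
differentiable and the derivative sequence satisfies the homogeneous linear
recurrence of order 3 (rather than 4) whose characteristic polynomial is
`p²/(t-1) = t³ - (2x+1)t² + x(x+2)t - x²`. -/
theorem deriv_seq_recurrence_order_three
    (f : ℕ → ℝ → ℝ)
    (h0 : Differentiable ℝ (f 0)) (h1 : Differentiable ℝ (f 1))
    (hrec : ∀ n, 2 ≤ n → ∀ x : ℝ, f n x = (x + 1) * f (n - 1) x - x * f (n - 2) x) :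
    (∀ n, Differentiable ℝ (f n)) ∧
    (∀ n, 3 ≤ n → ∀ x : ℝ,
      deriv (f n) x = (2 * x + 1) * deriv (f (n - 1)) x
        - x * (x + 2) * deriv (f (n - 2)) x + x ^ 2 * deriv (f (n - 3)) x) := by
  have hfun : ∀ n, f (n + 2) = fun x => (x + 1) * f (n + 1) x - x * f n x := by
    intro n
    funext x
    simpa using hrec (n + 2) (by omega) x
  have hdiff2 : ∀ n, Differentiable ℝ (f n) ∧ Differentiable ℝ (f (n + 1)) := by
    intro n
    induction n with
    | zero => exact ⟨h0, h1⟩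
    | succ n ih =>
      refine ⟨ih.2, ?_⟩
      rw [show n + 1 + 1 = n + 2 from rfl, hfun n]
      exact ((differentiable_id.add_const 1).mul ih.2).sub (differentiable_id.mul ih.1)
  have hdiff : ∀ n, Differentiable ℝ (f n) := fun n => (hdiff2 n).1
  refine ⟨hdiff, ?_⟩
  -- derivative of the recurrence
  have hder : ∀ n, ∀ x : ℝ, deriv (f (n + 2)) x
      = f (n + 1) x - f n x + (x + 1) * deriv (f (n + 1)) x - x * deriv (f n) x := by
    intro n x
    have h1d := ((hdiff (n + 1)) x).hasDerivAt
    have h0d := ((hdiff n) x).hasDerivAt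
    have H : HasDerivAt (f (n + 2))
        (1 * f (n + 1) x + (x + 1) * deriv (f (n + 1)) x
          - (1 * f n x + x * deriv (f n) x)) x := by
      rw [hfun n]
      exact (((hasDerivAt_id x).add_const 1).mul h1d).sub ((hasDerivAt_id x).mul h0d)
    rw [H.deriv]; ring
  intro n hn x
  obtain ⟨m, rfl⟩ : ∃ m, n = m + 3 := ⟨n - 3, by omega⟩
  have e1 := hder (m + 1) x
  have e2 := hder m x
  have e3 := hrec (m + 2) (by omega) x
  simp only [show m + 1 + 2 = m + 3 from rfl] at e1
  simp only [show m + 3 - 1 = m + 2 from rfl, show m + 3 - 2 = m + 1 from rfl,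
    show m + 3 - 3 = m from rfl, show m + 2 - 1 = m + 1 from rfl,
    show m + 2 - 2 = m from rfl] at *
  rw [e1, e2] at *
  nlinarith [e3, sq_nonneg x]
end
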